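/- arXiv:2510.13633 — 10 statements merged into one kernel-verified Lean document; each statement's English description precedes it below -/
import Mathlib

section
/- An allocation X = (X_1,...,X_n) of items among n agents with monotone valuations is envy-freeable (i.e., there exists a nonnegative subsidy vector p such that v_i(X_i) + p_i ≥ v_i(X_j) + p_j for all i,j) if and only if X is locally efficient (i.e., for every permutation π of [n], Σ_i v_i(X_i) ≥ Σ_i v_{π(i)}(X_i)). -/
/-!
Write `c i j = v i (X j) - v i (X i)` for the envy of `i` towards `j`; subsidies `p` make the
allocation envy-free iff `c i j + p j ≤ p i`. Summing these inequalities along a permutation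
gives local efficiency. Conversely, local efficiency says that every cycle of the complete
digraph weighted by `c` has nonpositive weight (a cycle is a cyclic permutation). Then
`p i` := the heaviest weight of a simple path starting at `i` is a nonnegative potential:
prepending the edge `i → j` to a simple path from `j` either gives a simple path from `i`,
or splits into a cycle through `i` followed by a simple path from `i`.
-/

open Finset

namespace EnvyFreeable

variable {ι : Type*}

def pathWeight (c : ι → ι → ℝ) (l : List ι) : ℝ :=
  (List.zipWith c l l.tail).sum

@[simp]
lemma pathWeight_singleton (c : ι → ι → ℝ) (x : ι) : pathWeight c [x] = 0 := by
  simp [pathWeight]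

@[simp]
lemma pathWeight_cons_cons (c : ι → ι → ℝ) (x y : ι) (l : List ι) :
    pathWeight c (x :: y :: l) = c x y + pathWeight c (y :: l) := by
  simp [pathWeight]

lemma pathWeight_append_cons (c : ι → ι → ℝ) (l₁ : List ι) (x : ι) (l₂ : List ι) :
    pathWeight c (l₁ ++ x :: l₂) = pathWeight c (l₁ ++ [x]) + pathWeight c (x :: l₂) := by
  induction l₁ with
  | nil => simp
  | cons a l₁ ih =>
    cases l₁ with
    | nil => simp
    | cons b l₁ => simp only [List.cons_append, pathWeight_cons_cons] at ih ⊢; linarith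

lemma map_formPerm_eq_rotate_one [DecidableEq ι] {l : List ι} (hl : l.Nodup) :
    l.map l.formPerm = l.rotate 1 := by
  rw [← List.pmap_next_eq_rotate_one l hl, ← List.pmap_eq_map (H := fun _ h => h)]
  exact List.pmap_congr_left _ fun x hx _ _ => List.formPerm_apply_mem_eq_next hl x hx

lemma pathWeight_closed_eq_sum_formPerm [DecidableEq ι] (c : ι → ι → ℝ) {x : ι} {l : List ι}
    (hl : (x :: l).Nodup) :
    pathWeight c (x :: l ++ [x]) = ∑ y ∈ (x :: l).toFinset, c y ((x :: l).formPerm y) := by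
  have hzip : List.zipWith c (x :: l ++ [x]) (l ++ [x]) = List.zipWith c (x :: l) (l ++ [x]) := by
    simpa using List.zipWith_append (f := c) (l₁ := x :: l) (l₂ := l ++ [x]) (l₁' := [x])
      (l₂' := []) (by simp)
  rw [List.sum_toFinset _ hl, ← List.zipWith_self (f := fun y z => c y ((x :: l).formPerm z)),
    ← List.zipWith_map_right, map_formPerm_eq_rotate_one hl, List.rotate_cons_succ,
    List.rotate_zero, ← hzip]
  rfl

lemma pathWeight_closed_nonpos [Fintype ι] {c : ι → ι → ℝ} (hc : ∀ i, c i i = 0)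
    (hcyc : ∀ σ : Equiv.Perm ι, ∑ i, c i (σ i) ≤ 0) {x : ι} {l : List ι} (hl : (x :: l).Nodup) :
    pathWeight c (x :: l ++ [x]) ≤ 0 := by
  classical
  rw [pathWeight_closed_eq_sum_formPerm c hl, Finset.sum_subset (subset_univ _)]
  · exact hcyc _
  · intro y _ hy
    rw [List.formPerm_apply_of_notMem (by simpa using hy), hc]

noncomputable def potential (c : ι → ι → ℝ) (i : ι) : ℝ :=
  ⨆ l : {l : List ι // (i :: l).Nodup}, pathWeight c (i :: l)

lemma bddAbove_range_pathWeight [Finite ι] (c : ι → ι → ℝ) (i : ι) :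
    BddAbove (Set.range fun l : {l : List ι // (i :: l).Nodup} => pathWeight c (i :: l)) := by
  have := Fintype.ofFinite ι
  classical
  have : Finite {l : List ι // (i :: l).Nodup} :=
    Finite.of_injective (fun l => (⟨l.1, l.2.of_cons⟩ : {l : List ι // l.Nodup}))
      fun l l' h => Subtype.ext (congrArg Subtype.val h :)
  exact (Set.finite_range _).bddAbove

lemma pathWeight_le_potential [Finite ι] (c : ι → ι → ℝ) {i : ι} {l : List ι}
    (hl : (i :: l).Nodup) : pathWeight c (i :: l) ≤ potential c i :=
  le_ciSup (bddAbove_range_pathWeight c i) ⟨l, hl⟩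

lemma potential_nonneg [Finite ι] (c : ι → ι → ℝ) (i : ι) : 0 ≤ potential c i := by
  simpa using pathWeight_le_potential c (List.nodup_singleton i)

lemma potential_le {c : ι → ι → ℝ} {i : ι} {b : ℝ}
    (h : ∀ l : List ι, (i :: l).Nodup → pathWeight c (i :: l) ≤ b) : potential c i ≤ b :=
  have : Nonempty {l : List ι // (i :: l).Nodup} := ⟨⟨[], List.nodup_singleton i⟩⟩
  ciSup_le fun l => h l.1 l.2

lemma add_pathWeight_le_potential [Fintype ι] {c : ι → ι → ℝ} (hc : ∀ i, c i i = 0)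
    (hcyc : ∀ σ : Equiv.Perm ι, ∑ i, c i (σ i) ≤ 0) (i : ι) {j : ι} {l : List ι}
    (hl : (j :: l).Nodup) : c i j + pathWeight c (j :: l) ≤ potential c i := by
  by_cases hij : i = j
  · subst hij
    simpa [hc] using pathWeight_le_potential c hl
  by_cases hil : i ∈ l
  · obtain ⟨s, t, rfl⟩ := List.append_of_mem hil
    have hcycle : (i :: j :: s).Nodup := by
      have := hl.sublist (((List.singleton_sublist.2 List.mem_cons_self).append_left s).cons_cons j)
      exact List.perm_append_singleton i (j :: s) |>.nodup_iff.1 this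
    have htail : (i :: t).Nodup :=
      hl.sublist ((List.sublist_append_right s (i :: t)).cons j)
    calc c i j + pathWeight c (j :: (s ++ i :: t))
        = pathWeight c (i :: j :: s ++ [i]) + pathWeight c (i :: t) := by
          rw [← List.cons_append, pathWeight_append_cons]
          simp only [List.cons_append, pathWeight_cons_cons]
          ring
      _ ≤ 0 + potential c i :=
          add_le_add (pathWeight_closed_nonpos hc hcyc hcycle) (pathWeight_le_potential c htail)
      _ = potential c i := zero_add _
  · rw [← pathWeight_cons_cons]
    exact pathWeight_le_potential c (List.nodup_cons.2 ⟨by simp [hij, hil], hl⟩)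

lemma add_potential_le_potential [Fintype ι] {c : ι → ι → ℝ} (hc : ∀ i, c i i = 0)
    (hcyc : ∀ σ : Equiv.Perm ι, ∑ i, c i (σ i) ≤ 0) (i j : ι) :
    c i j + potential c j ≤ potential c i := by
  rw [← le_sub_iff_add_le']
  exact potential_le fun l hl => le_sub_iff_add_le'.2 (add_pathWeight_le_potential hc hcyc i hl)

lemma sum_apply_perm_le_sum_diag_of_envyFree [Fintype ι] {a : ι → ι → ℝ} {p : ι → ℝ}
    (hp : ∀ i j, a i j + p j ≤ a i i + p i) (π : Equiv.Perm ι) :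
    ∑ i, a (π i) i ≤ ∑ i, a i i := by
  have h := sum_le_sum fun i (_ : i ∈ univ) => hp (π i) i
  rw [Equiv.sum_comp π fun i => a i i + p i, sum_add_distrib, sum_add_distrib] at h
  linarith

lemma exists_envyFree_of_sum_apply_perm_le_sum_diag [Fintype ι] {a : ι → ι → ℝ}
    (h : ∀ π : Equiv.Perm ι, ∑ i, a (π i) i ≤ ∑ i, a i i) :
    ∃ p : ι → ℝ, (∀ i, 0 ≤ p i) ∧ ∀ i j, a i j + p j ≤ a i i + p i := by
  set c : ι → ι → ℝ := fun i j => a i j - a i i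
  have hcyc (σ : Equiv.Perm ι) : ∑ i, c i (σ i) ≤ 0 := by
    have := h σ⁻¹
    rw [← Equiv.sum_comp σ] at this
    simpa [c, sum_sub_distrib] using this
  refine ⟨potential c, potential_nonneg c, fun i j => ?_⟩
  have := add_potential_le_potential (c := c) (by simp [c]) hcyc i j
  simp only [c] at this
  linarith

end EnvyFreeable

theorem envy_freeable_iff_locally_efficient_general (n m : ℕ)
    (v : Fin n → Finset (Fin m) → ℝ)
    (X : Fin n → Finset (Fin m)) :
    (∃ p : Fin n → ℝ, (∀ i, 0 ≤ p i) ∧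
        ∀ i j, v i (X j) + p j ≤ v i (X i) + p i) ↔
      (∀ π : Equiv.Perm (Fin n), ∑ i, v (π i) (X i) ≤ ∑ i, v i (X i)) :=
  ⟨fun ⟨_, _, hp⟩ => EnvyFreeable.sum_apply_perm_le_sum_diag_of_envyFree hp,
    EnvyFreeable.exists_envyFree_of_sum_apply_perm_le_sum_diag (a := fun i j => v i (X j))⟩

/-- An allocation with monotone normalized valuations is envy-freeable (there is a
nonnegative subsidy vector making it envy-free) iff it is locally efficient. -/
theorem envy_freeable_iff_locally_efficient (n m : ℕ)
    (v : Fin n → Finset (Fin m) → ℝ)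
    (hnonneg : ∀ i S, 0 ≤ v i S)
    (hmono : ∀ i, ∀ S T : Finset (Fin m), S ⊆ T → v i S ≤ v i T)
    (hnorm : ∀ i, v i ∅ = 0)
    (X : Fin n → Finset (Fin m))
    (hdisj : ∀ i j, i ≠ j → Disjoint (X i) (X j))
    (hcover : (Finset.univ : Finset (Fin n)).biUnion X = Finset.univ) :
    (∃ p : Fin n → ℝ, (∀ i, 0 ≤ p i) ∧
        ∀ i j, v i (X j) + p j ≤ v i (X i) + p i) ↔
      (∀ π : Equiv.Perm (Fin n), ∑ i, v (π i) (X i) ≤ ∑ i, v i (X i)) :=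
  envy_freeable_iff_locally_efficient_general n m v X
end

section
/- Let X be a locally efficient allocation and for each agent i let ℓ(i) be the maximum weight of a (possibly empty) directed path starting at i in the envy graph G_X. Then setting p_i = ℓ(i) for all i gives an envy-free outcome, i.e., v_i(X_i) + ℓ(i) ≥ v_i(X_j) + ℓ(j) for all agents i, j. -/
open Finset

/-- The set of total weights of (possibly empty) directed paths starting at vertex `i`
in the complete weighted digraph on `Fin n` with arc weights `w`. A path is an injective
sequence of vertices starting at `i`. -/
def pathWeightsFrom {n : ℕ} (w : Fin n → Fin n → ℝ) (i : Fin n) : Set ℝ :=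
  {x | ∃ (k : ℕ) (c : Fin (k + 1) → Fin n), Function.Injective c ∧ c 0 = i ∧
    x = ∑ j : Fin k, w (c j.castSucc) (c j.succ)}

/-!
Local efficiency, applied to the permutation rotating bundles along a cycle, says every cycle of
the envy graph has nonpositive weight. Take a heaviest path `P` from `j`. If `i` is not on `P`,
then the arc `i → j` followed by `P` is a path from `i`, so `w i j + ℓ j ≤ ℓ i`. If `i` is on `P`,
cut `P` at `i`: the part before `i` closed by `i → j` is a cycle, and the part after `i` is a path
from `i`, weighing at most `ℓ i`.
-/

theorem Fin.sum_univ_finRotate {M : Type*} [AddCommMonoid M] {k : ℕ}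
    (g : Fin (k + 1) → Fin (k + 1) → M) :
    ∑ r, g r (finRotate (k + 1) r) = ∑ q : Fin k, g q.castSucc q.succ + g (Fin.last k) 0 := by
  rw [Fin.sum_univ_castSucc, finRotate_last]
  congr 2 with q
  rw [finRotate_apply, Fin.coeSucc_eq_succ]

theorem Equiv.Perm.sum_viaFintypeEmbedding_sub {ι α M : Type*} [Fintype ι] [Fintype α]
    [DecidableEq α] [AddCommGroup M] (σ : Equiv.Perm ι) (f : ι ↪ α) (g : α → α → M) :
    ∑ a, (g (σ.viaFintypeEmbedding f a) a - g a a) = ∑ i, (g (f (σ i)) (f i) - g (f i) (f i)) := by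
  rw [← sum_subset (subset_univ (univ.map f)), sum_map]
  · simp only [Equiv.Perm.viaFintypeEmbedding_apply_image]
  · intro a _ ha
    rw [σ.viaFintypeEmbedding_apply_notMem_range f (by simpa using ha), sub_self]

section

variable {V : Type*} (w : V → V → ℝ)

def walkWeight (d : ℕ → V) (k : ℕ) : ℝ :=
  ∑ s ∈ range k, w (d s) (d (s + 1))

theorem walkWeight_add (d : ℕ → V) (t r : ℕ) :
    walkWeight w d (t + r) = walkWeight w d t + walkWeight w (fun s => d (t + s)) r :=
  sum_range_add _ t r

theorem walkWeight_succ_cons (i : V) (d : ℕ → V) (k : ℕ) :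
    walkWeight w (fun s => if s = 0 then i else d (s - 1)) (k + 1) =
      w i (d 0) + walkWeight w d k := by
  simp [walkWeight, sum_range_succ', add_comm]

theorem walkWeight_eq_sum_fin (d : ℕ → V) (k : ℕ) :
    walkWeight w d k = ∑ q : Fin k, w (d q) (d (q + 1)) :=
  (Fin.sum_univ_eq_sum_range (fun s => w (d s) (d (s + 1))) k).symm

end

theorem Set.injOn_Iic_succ_cons {V : Type*} {d : ℕ → V} {k : ℕ} {i : V}
    (hd : Set.InjOn d (Set.Iic k)) (hi : ∀ t ≤ k, d t ≠ i) :
    Set.InjOn (fun s => if s = 0 then i else d (s - 1)) (Set.Iic (k + 1)) := by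
  rintro (_ | a) ha (_ | b) hb h
  · rfl
  · exact absurd h.symm (by simpa using hi b (by simpa using hb))
  · exact absurd h (by simpa using hi a (by simpa using ha))
  · simp only [Set.mem_Iic, add_le_add_iff_right] at ha hb
    simpa using hd ha hb (by simpa using h)

theorem mem_pathWeightsFrom_iff {n : ℕ} (w : Fin n → Fin n → ℝ) {i : Fin n} {x : ℝ} :
    x ∈ pathWeightsFrom w i ↔
      ∃ k, ∃ d : ℕ → Fin n, Set.InjOn d (Set.Iic k) ∧ d 0 = i ∧ x = walkWeight w d k := by
  constructor
  · rintro ⟨k, c, hc, rfl, rfl⟩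
    refine ⟨k, fun s => c (Fin.clamp s k), ?_, rfl, ?_⟩
    · rintro a (ha : a ≤ k) b (hb : b ≤ k) h
      simpa [Fin.ext_iff, min_eq_left ha, min_eq_left hb] using hc h
    · rw [walkWeight_eq_sum_fin]
      congr 1 with q
      congr 2 <;> ext <;> simp
  · rintro ⟨k, d, hd, rfl, rfl⟩
    exact ⟨k, fun s => d s, fun a b h => Fin.ext (hd a.is_le b.is_le h), rfl,
      walkWeight_eq_sum_fin w d k⟩

theorem walkWeight_add_closing_nonpos_of_sum_perm_le {V : Type*} [Fintype V] [DecidableEq V]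
    (u : V → V → ℝ) (hLE : ∀ π : Equiv.Perm V, ∑ a, u (π a) a ≤ ∑ a, u a a)
    {d : ℕ → V} {k : ℕ} (hd : Set.InjOn d (Set.Iic k)) :
    walkWeight (fun a b => u a b - u a a) d k + (u (d k) (d 0) - u (d k) (d k)) ≤ 0 := by
  let f : Fin (k + 1) ↪ V := ⟨fun s => d s, fun a b h => Fin.ext (hd a.is_le b.is_le h)⟩
  let ρ : Equiv.Perm (Fin (k + 1)) := finRotate (k + 1)
  -- agent `f r` takes the bundle of its successor `f (ρ r)` along the cycle
  let π := Equiv.Perm.viaFintypeEmbedding ρ.symm f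
  calc walkWeight (fun a b => u a b - u a a) d k + (u (d k) (d 0) - u (d k) (d k))
      = ∑ r, (u (f r) (f (ρ r)) - u (f r) (f r)) := by
        rw [Fin.sum_univ_finRotate (fun r r' => u (f r) (f r') - u (f r) (f r)),
          walkWeight_eq_sum_fin]
        rfl
    _ = ∑ s, u (f (ρ.symm s)) (f s) - ∑ s, u (f s) (f s) := by
        rw [sum_sub_distrib, ← ρ.symm.sum_comp (fun r => u (f r) (f (ρ r)))]
        simp only [Equiv.apply_symm_apply]
    _ = ∑ s, (u (f (ρ.symm s)) (f s) - u (f s) (f s)) := (sum_sub_distrib ..).symm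
    _ = ∑ a, (u (π a) a - u a a) := (Equiv.Perm.sum_viaFintypeEmbedding_sub ρ.symm f u).symm
    _ ≤ 0 := by rw [sum_sub_distrib, sub_nonpos]; exact hLE π

theorem arc_add_le_of_cycles_nonpos {n : ℕ} (w : Fin n → Fin n → ℝ)
    (hcyc : ∀ k, ∀ d : ℕ → Fin n, Set.InjOn d (Set.Iic k) → walkWeight w d k + w (d k) (d 0) ≤ 0)
    {i j : Fin n} {x L : ℝ} (hx : x ∈ pathWeightsFrom w j)
    (hL : L ∈ upperBounds (pathWeightsFrom w i)) :
    w i j + x ≤ L := by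
  obtain ⟨k, d, hd, rfl, rfl⟩ := (mem_pathWeightsFrom_iff w).1 hx
  by_cases hi : ∃ t ≤ k, d t = i
  · obtain ⟨t, htk, rfl⟩ := hi
    have hcycle := hcyc t d (hd.mono (Set.Iic_subset_Iic.2 htk))
    have htail : walkWeight w (fun s => d (t + s)) (k - t) ≤ L := by
      refine hL ((mem_pathWeightsFrom_iff w).2 ⟨k - t, _, ?_, rfl, rfl⟩)
      rintro a (ha : a ≤ k - t) b (hb : b ≤ k - t) h
      have := hd (show t + a ≤ k by omega) (show t + b ≤ k by omega) h
      omega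
    have hsplit := walkWeight_add w d t (k - t)
    rw [Nat.add_sub_cancel' htk] at hsplit
    linarith
  · push Not at hi
    rw [← walkWeight_succ_cons]
    exact hL ((mem_pathWeightsFrom_iff w).2 ⟨k + 1, _, Set.injOn_Iic_succ_cons hd hi, rfl, rfl⟩)

theorem heaviest_path_subsidy_envy_free_general (n m : ℕ)
    (v : Fin n → Finset (Fin m) → ℝ)
    (X : Fin n → Finset (Fin m))
    (hLE : ∀ π : Equiv.Perm (Fin n), ∑ i, v (π i) (X i) ≤ ∑ i, v i (X i))
    (ℓ : Fin n → ℝ)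
    (hℓ : ∀ i, IsGreatest (pathWeightsFrom (fun i k => v i (X k) - v i (X i)) i) (ℓ i)) :
    ∀ i j, v i (X j) + ℓ j ≤ v i (X i) + ℓ i := by
  intro i j
  have hcyc (k : ℕ) (d : ℕ → Fin n) (hd : Set.InjOn d (Set.Iic k)) :=
    walkWeight_add_closing_nonpos_of_sum_perm_le (fun a b => v a (X b)) hLE hd
  linarith [arc_add_le_of_cycles_nonpos _ hcyc (hℓ j).1 (hℓ i).2]

/-- For a locally efficient allocation, setting each agent's subsidy to the weight
`ℓ i` of the heaviest path starting at `i` in the envy graph yields envy-freeness. -/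
theorem heaviest_path_subsidy_envy_free (n m : ℕ)
    (v : Fin n → Finset (Fin m) → ℝ)
    (hmono : ∀ i, ∀ S T : Finset (Fin m), S ⊆ T → v i S ≤ v i T)
    (hnorm : ∀ i, v i ∅ = 0)
    (X : Fin n → Finset (Fin m))
    (hdisj : ∀ i j, i ≠ j → Disjoint (X i) (X j))
    (hcover : (Finset.univ : Finset (Fin n)).biUnion X = Finset.univ)
    (hLE : ∀ π : Equiv.Perm (Fin n), ∑ i, v (π i) (X i) ≤ ∑ i, v i (X i))
    (ℓ : Fin n → ℝ)
    (hℓ : ∀ i, IsGreatest (pathWeightsFrom (fun i k => v i (X k) - v i (X i)) i) (ℓ i)) :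
    ∀ i j, v i (X j) + ℓ j ≤ v i (X i) + ℓ i :=
  heaviest_path_subsidy_envy_free_general n m v X hLE ℓ hℓ
end

section
/- If X is a locally efficient allocation and the marginal value of every item is at most 1 for every agent (i.e., v_i(S ∪ {g}) − v_i(S) ≤ 1 for all i, S, g), then the sum over agents of the heaviest-path weights in the envy graph, Σ_i ℓ(i), is at most m(n−1). -/
open Finset

/-- If `X` is locally efficient and every marginal value is at most `1`, then the sum
of the heaviest-path weights in the envy graph is at most `m (n - 1)`. -/
theorem sum_heaviest_paths_le (n m : ℕ) (hn : 1 ≤ n)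
    (v : Fin n → Finset (Fin m) → ℝ)
    (hmono : ∀ i, ∀ S T : Finset (Fin m), S ⊆ T → v i S ≤ v i T)
    (hnorm : ∀ i, v i ∅ = 0)
    (hmarg : ∀ i (S : Finset (Fin m)) (g : Fin m), v i (insert g S) - v i S ≤ 1)
    (X : Fin n → Finset (Fin m))
    (hdisj : ∀ i j, i ≠ j → Disjoint (X i) (X j))
    (hcover : (Finset.univ : Finset (Fin n)).biUnion X = Finset.univ)
    (hLE : ∀ π : Equiv.Perm (Fin n), ∑ i, v (π i) (X i) ≤ ∑ i, v i (X i))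
    (ℓ : Fin n → ℝ)
    (hℓ : ∀ i, IsGreatest (pathWeightsFrom (fun i k => v i (X k) - v i (X i)) i) (ℓ i)) :
    ∑ i, ℓ i ≤ (m : ℝ) * ((n : ℝ) - 1) := by
  have hv0 : ∀ i S, 0 ≤ v i S := fun i S => (hnorm i) ▸ hmono i ∅ S (Finset.empty_subset S)
  have hvcard : ∀ i (S : Finset (Fin m)), v i S ≤ (S.card : ℝ) := by
    intro i S
    induction S using Finset.induction_on with
    | empty => simp [hnorm]
    | @insert g S hg ih =>
      have := hmarg i S g
      rw [Finset.card_insert_of_notMem hg]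
      push_cast
      linarith
  have hsumN : ∑ k, (X k).card = m := by
    rw [← Finset.card_biUnion (fun i _ j _ hij => hdisj i j hij), hcover,
      Finset.card_univ, Fintype.card_fin]
  have hsum : ∑ k, ((X k).card : ℝ) = (m : ℝ) := by
    exact_mod_cast congrArg (Nat.cast : ℕ → ℝ) hsumN
  have hbound : ∀ i, ℓ i ≤ (m : ℝ) - (X i).card := by
    intro i
    obtain ⟨⟨k, c, hinj, hc0, hx⟩, -⟩ := hℓ i
    have h1 : ℓ i ≤ ∑ j : Fin k, ((X (c j.succ)).card : ℝ) := by
      rw [hx]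
      dsimp only
      refine Finset.sum_le_sum fun j _ => ?_
      have := hv0 (c j.castSucc) (X (c j.castSucc))
      have := hvcard (c j.castSucc) (X (c j.succ))
      linarith
    have h2 : ∑ j : Fin k, ((X (c j.succ)).card : ℝ)
        ≤ ∑ t ∈ Finset.univ.erase i, ((X t).card : ℝ) := by
      have hinj2 : ∀ a ∈ (Finset.univ : Finset (Fin k)), ∀ b ∈ Finset.univ,
          c a.succ = c b.succ → a = b := by
        intro a _ b _ hab
        exact Fin.succ_injective _ (hinj hab)
      rw [show (∑ j : Fin k, ((X (c j.succ)).card : ℝ))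
          = ∑ t ∈ Finset.univ.image (fun j : Fin k => c j.succ), ((X t).card : ℝ) from
        (Finset.sum_image (f := fun t => ((X t).card : ℝ)) hinj2).symm]
      apply Finset.sum_le_sum_of_subset_of_nonneg
      · intro t ht
        simp only [Finset.mem_image] at ht
        obtain ⟨j, _, rfl⟩ := ht
        refine Finset.mem_erase.mpr ⟨?_, Finset.mem_univ _⟩
        intro h
        exact Fin.succ_ne_zero j (hinj (h.trans hc0.symm))
      · intros; positivity
    have h3 : ∑ t ∈ Finset.univ.erase i, ((X t).card : ℝ) = (m : ℝ) - (X i).card := by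
      rw [Finset.sum_erase_eq_sub (Finset.mem_univ i), hsum]
    linarith
  calc ∑ i, ℓ i ≤ ∑ i : Fin n, ((m : ℝ) - (X i).card) :=
        Finset.sum_le_sum fun i _ => hbound i
    _ = (n : ℝ) * m - m := by
        rw [Finset.sum_sub_distrib, hsum, Finset.sum_const, Finset.card_univ,
          Fintype.card_fin, nsmul_eq_mul]
    _ = (m : ℝ) * ((n : ℝ) - 1) := by ring
end

section
/- For k-demand valuations and an allocation X in which each bundle is held by an agent valuing it at least as much as any other agent does, any directed path in the envy graph has total weight at most k; hence the minimum envy-eliminating subsidy is at most k(n−1). -/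
open Finset

/-- The `k`-demand valuation induced by singleton values `val`. -/
noncomputable def kdemandVal {m : ℕ} (k : ℕ) (val : Fin m → ℝ) (S : Finset (Fin m)) : ℝ :=
  (S.powerset.filter (fun T => T.card ≤ k)).sup' ⟨∅, by simp⟩ (fun T => ∑ j ∈ T, val j)

lemma kdemandVal_nonneg {m : ℕ} (k : ℕ) (val : Fin m → ℝ) (S : Finset (Fin m)) :
    0 ≤ kdemandVal k val S := by
  have h : (∅ : Finset (Fin m)) ∈ S.powerset.filter (fun T => T.card ≤ k) := by simp
  have := Finset.le_sup' (fun T => ∑ j ∈ T, val j) h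
  simpa [kdemandVal] using this

lemma kdemandVal_le_k {m : ℕ} (k : ℕ) (val : Fin m → ℝ) (hv : ∀ j, val j ≤ 1)
    (S : Finset (Fin m)) : kdemandVal k val S ≤ k := by
  apply Finset.sup'_le
  intro T hT
  simp only [mem_filter] at hT
  calc ∑ j ∈ T, val j ≤ ∑ _j ∈ T, (1 : ℝ) := Finset.sum_le_sum (fun j _ => hv j)
    _ = T.card := by simp
    _ ≤ k := by exact_mod_cast hT.2

lemma telescope {r : ℕ} (f : Fin (r + 1) → ℝ) :
    ∑ j : Fin r, (f j.succ - f j.castSucc) = f (Fin.last r) - f 0 := by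
  set F : ℕ → ℝ := fun t => f ⟨min t r, by omega⟩ with hF
  have h1 : ∀ j : Fin r, f j.succ - f j.castSucc = F (j.val + 1) - F j.val := by
    intro j
    have hj := j.isLt
    have e1 : f j.succ = F (j.val + 1) := by
      simp only [hF]
      congr 1
      exact Fin.ext (by simp [Nat.min_eq_left (by omega : j.val + 1 ≤ r)])
    have e2 : f j.castSucc = F j.val := by
      simp only [hF]
      congr 1
      exact Fin.ext (by simp [Nat.min_eq_left (by omega : j.val ≤ r)])
    rw [e1, e2]
  calc ∑ j : Fin r, (f j.succ - f j.castSucc)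
      = ∑ j : Fin r, (F (j.val + 1) - F j.val) := by
        exact Finset.sum_congr rfl (fun j _ => h1 j)
    _ = ∑ t ∈ Finset.range r, (F (t + 1) - F t) :=
        Fin.sum_univ_eq_sum_range (fun t => F (t + 1) - F t) r
    _ = F r - F 0 := Finset.sum_range_sub F r
    _ = f (Fin.last r) - f 0 := by
        simp only [hF]
        congr 1 <;> exact congrArg f (Fin.ext (by simp [Fin.last]))

/-- For `k`-demand valuations with singleton values in `[0,1]`, if every bundle is held
by an agent valuing it most, then every directed path in the envy graph has total weight
at most `k`, and some nonnegative subsidy vector of total at most `k (n - 1)` makes the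
allocation envy-free. -/
theorem kdemand_subsidy_bound (n m k : ℕ) (hn : 1 ≤ n)
    (val : Fin n → Fin m → ℝ)
    (hval : ∀ i j, 0 ≤ val i j ∧ val i j ≤ 1)
    (X : Fin n → Finset (Fin m))
    (hdisj : ∀ i j, i ≠ j → Disjoint (X i) (X j))
    (hcover : (Finset.univ : Finset (Fin n)).biUnion X = Finset.univ)
    (htop : ∀ i i', kdemandVal k (val i') (X i) ≤ kdemandVal k (val i) (X i)) :
    (∀ (r : ℕ) (c : Fin (r + 1) → Fin n), Function.Injective c →
      ∑ j : Fin r,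
        (kdemandVal k (val (c j.castSucc)) (X (c j.succ)) -
          kdemandVal k (val (c j.castSucc)) (X (c j.castSucc))) ≤ (k : ℝ)) ∧
    ∃ p : Fin n → ℝ, (∀ i, 0 ≤ p i) ∧
      (∀ i j, kdemandVal k (val i) (X j) + p j ≤ kdemandVal k (val i) (X i) + p i) ∧
      ∑ i, p i ≤ (k : ℝ) * ((n : ℝ) - 1) := by
  set v : Fin n → ℝ := fun i => kdemandVal k (val i) (X i) with hv
  constructor
  · intro r c _hc
    have hstep : ∀ j : Fin r,
        kdemandVal k (val (c j.castSucc)) (X (c j.succ)) -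
          kdemandVal k (val (c j.castSucc)) (X (c j.castSucc)) ≤
          v (c j.succ) - v (c j.castSucc) := by
      intro j
      have := htop (c j.succ) (c j.castSucc)
      simp only [hv]
      linarith
    have htel := telescope (fun j : Fin (r + 1) => v (c j))
    have hK : v (c (Fin.last r)) ≤ (k : ℝ) :=
      kdemandVal_le_k k _ (fun j => (hval _ j).2) _
    have h0 : 0 ≤ v (c 0) := kdemandVal_nonneg k _ _
    calc ∑ j : Fin r,
          (kdemandVal k (val (c j.castSucc)) (X (c j.succ)) -
            kdemandVal k (val (c j.castSucc)) (X (c j.castSucc)))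
        ≤ ∑ j : Fin r, (v (c j.succ) - v (c j.castSucc)) :=
          Finset.sum_le_sum (fun j _ => hstep j)
      _ = v (c (Fin.last r)) - v (c 0) := htel
      _ ≤ (k : ℝ) := by linarith
  · have hne : (Finset.univ : Finset (Fin n)).Nonempty := ⟨⟨0, hn⟩, mem_univ _⟩
    set M : ℝ := Finset.univ.sup' hne v with hM
    refine ⟨fun i => M - v i, ?_, ?_, ?_⟩
    · intro i
      have : v i ≤ M := Finset.le_sup' v (mem_univ i)
      show (0:ℝ) ≤ M - v i
      linarith
    · intro i j
      have h1 : kdemandVal k (val i) (X j) ≤ v j := htop j i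
      show kdemandVal k (val i) (X j) + (M - v j) ≤ kdemandVal k (val i) (X i) + (M - v i)
      have h2 : v i = kdemandVal k (val i) (X i) := rfl
      linarith
    · obtain ⟨i₀, _, hi₀⟩ := Finset.exists_mem_eq_sup' hne v
      have hMk : M ≤ (k : ℝ) := by
        rw [hM, hi₀]
        exact kdemandVal_le_k k _ (fun j => (hval _ j).2) _
      have hMsum : M ≤ ∑ i, v i := by
        rw [hM, hi₀]
        exact Finset.single_le_sum (fun i _ => kdemandVal_nonneg k _ _) (mem_univ i₀)
      have hsum : ∑ i, (M - v i) = (n : ℝ) * M - ∑ i, v i := by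
        rw [Finset.sum_sub_distrib]
        simp [Finset.card_univ, mul_comm]
      rw [hsum]
      have hn1 : (1 : ℝ) ≤ (n : ℝ) := by exact_mod_cast hn
      nlinarith [mul_le_mul_of_nonneg_left hMk (by linarith : (0 : ℝ) ≤ (n : ℝ) - 1)]
end

section
/- There exist two budget-additive valuations (budgets 1−ε and 1 with 0 < ε < 1/6) and two items arriving online such that no online algorithm (irrevocably assigning each item on arrival) can maintain local efficiency after both items: whichever agent receives the first item, the adversary can choose the second item so that every assignment of it produces an allocation whose bundle-swap strictly increases social welfare. -/
open Finset

/-- Budget-additive impossibility: with agent 1 of budget `1 - ε` and agent 2 of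
budget `1`, item 1 valued `(1-ε, 1-2ε)` and item 2 valued `(1-ε, 1/2)`, if item 1 is
given to agent 1, then neither assignment of item 2 yields a locally efficient
allocation: in both cases swapping the two bundles strictly increases social welfare. -/
theorem budget_additive_online_impossible (ε : ℝ) (h1 : 0 < ε) (h2 : ε < 1 / 6)
    (v1 v2 : Finset (Fin 2) → ℝ)
    (hv1 : ∀ S, v1 S = min (∑ _j ∈ S, (1 - ε)) (1 - ε))
    (hv2 : ∀ S, v2 S = min (∑ j ∈ S, (![1 - 2 * ε, 1 / 2] : Fin 2 → ℝ) j) 1) :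
    v1 {0, 1} + v2 ∅ < v1 ∅ + v2 {0, 1} ∧
    v1 {0} + v2 {1} < v1 {1} + v2 {0} := by
  simp only [hv1, hv2, Finset.sum_insert (by decide : (0:Fin 2) ∉ ({1} : Finset (Fin 2))),
    Finset.sum_singleton, Finset.sum_empty, Matrix.cons_val_zero, Matrix.cons_val_one,
    Matrix.head_cons]
  constructor
  · rw [min_eq_right (by linarith), min_eq_left (by linarith), min_eq_left (by linarith),
      min_eq_right (by linarith)]
    linarith
  · rw [min_eq_left (by linarith), min_eq_left (by linarith), min_eq_left (by linarith)]
    linarith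
end

section
/- There exist two matroid-rank (binary submodular) valuations on three items {a,b,c} — agent 1's matroid has bases {a,b} and {b,c}, agent 2's has bases {a,b} and {a,c} — such that if agent 1 holds {a} and agent 2 holds {b}, then for either assignment of item c, swapping the two resulting bundles strictly increases social welfare; hence neither assignment is locally efficient. -/
open Finset

/-- Matroid-rank impossibility: agent 1's matroid on items `{a,b,c} = {0,1,2}` has
bases `{a,b}` and `{b,c}`, agent 2's has bases `{a,b}` and `{a,c}`; the rank of a set is
the maximum intersection size with a basis. If agent 1 holds `{a}` and agent 2 holds
`{b}`, then whichever agent receives item `c`, swapping the two resulting bundles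
strictly increases social welfare, so neither assignment is locally efficient. -/
theorem binary_submodular_online_impossible
    (v1 v2 : Finset (Fin 3) → ℕ)
    (hv1 : ∀ S, v1 S = max (S ∩ ({0, 1} : Finset (Fin 3))).card (S ∩ ({1, 2} : Finset (Fin 3))).card)
    (hv2 : ∀ S, v2 S = max (S ∩ ({0, 1} : Finset (Fin 3))).card (S ∩ ({0, 2} : Finset (Fin 3))).card) :
    v1 {0, 2} + v2 {1} < v1 {1} + v2 {0, 2} ∧
    v1 {0} + v2 {1, 2} < v1 {1, 2} + v2 {0} := by
  simp [hv1, hv2]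
end

section
/- In the rank-one lower-bound instance with w_i = 1 − iε and q_j = 1 − ε + 2^{j−n}ε (0 < ε < 1/n), any allocation maintained online under local efficiency satisfies: at every step, for each i < n, either both agents i and i+1 hold no goods, or agent i holds strictly more goods than agent i+1. -/
open Finset

/-- Rank-one lower-bound instance: `n` agents with weights `w i = 1 - (i+1)·ε`
(0-indexed) and items `j = 0, 1, ..., m-1` arriving in order with base values
`q j = 1 - ε + 2^{(j+1)-n}·ε`, where `0 < ε < 1/n`. If an online algorithm irrevocably
assigns each arriving item (assignment `a`) so that every prefix allocation is locally
efficient, then at every step `t`, for each pair of consecutive agents `i, i+1`, either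
both hold no goods or agent `i` holds strictly more goods than agent `i+1`. -/
theorem rank_one_lower_bound_structure (n m : ℕ) (hn : 0 < n)
    (ε : ℝ) (hε0 : 0 < ε) (hε1 : ε < 1 / n)
    (w : Fin n → ℝ) (hw : ∀ i : Fin n, w i = 1 - ((i : ℕ) + 1) * ε)
    (q : Fin m → ℝ)
    (hqdef : ∀ j : Fin m, q j = 1 - ε + (2 : ℝ) ^ (((j : ℕ) : ℤ) + 1 - (n : ℤ)) * ε)
    (a : Fin m → Fin n)
    (X : ℕ → Fin n → Finset (Fin m))
    (hX : ∀ (t : ℕ) (i : Fin n),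
      X t i = (Finset.univ : Finset (Fin m)).filter (fun (j : Fin m) => (j : ℕ) < t ∧ a j = i))
    (hLE : ∀ t : ℕ, ∀ π : Equiv.Perm (Fin n),
      ∑ i, w (π i) * ∑ g ∈ X t i, q g ≤ ∑ i, w i * ∑ g ∈ X t i, q g) :
    ∀ t : ℕ, ∀ i : Fin n, ∀ h : (i : ℕ) + 1 < n,
      ((X t i).card = 0 ∧ (X t ⟨(i : ℕ) + 1, h⟩).card = 0) ∨
        (X t ⟨(i : ℕ) + 1, h⟩).card < (X t i).card := by
  have hεn : ε < 1 := lt_of_lt_of_le hε1 (by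
    rw [div_le_one (by exact_mod_cast hn)]
    exact_mod_cast hn)
  -- membership characterization
  have hmem : ∀ (t : ℕ) (i : Fin n) (g : Fin m), g ∈ X t i ↔ (g : ℕ) < t ∧ a g = i := by
    intro t i g; rw [hX]; simp
  set Q : ℕ → Fin n → ℝ := fun t i => ∑ g ∈ X t i, q g with hQ
  -- positivity of item values
  have hq_lb : ∀ j : Fin m, 1 - ε < q j := by
    intro j; rw [hqdef]
    have : (0:ℝ) < (2:ℝ) ^ (((j : ℕ) : ℤ) + 1 - (n : ℤ)) * ε :=
      mul_pos (zpow_pos (by norm_num) _) hε0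
    linarith
  -- sortedness of bundle values from local efficiency
  have hsort : ∀ (t : ℕ) (i i' : Fin n), (i : ℕ) < (i' : ℕ) → Q t i' ≤ Q t i := by
    intro t i i' hlt
    have hne : i ≠ i' := by intro e; rw [e] at hlt; exact lt_irrefl _ hlt
    have hswap := hLE t (Equiv.swap i i')
    have h1 : i' ∈ (Finset.univ : Finset (Fin n)).erase i :=
      Finset.mem_erase.mpr ⟨Ne.symm hne, Finset.mem_univ _⟩
    have split : ∀ f : Fin n → ℝ,
        ∑ x, f x = ∑ x ∈ ((Finset.univ.erase i).erase i'), f x + f i' + f i := by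
      intro f
      rw [← Finset.sum_erase_add Finset.univ f (Finset.mem_univ i),
        ← Finset.sum_erase_add (Finset.univ.erase i) f h1]
    have key : w i' * Q t i + w i * Q t i' ≤ w i * Q t i + w i' * Q t i' := by
      rw [split (fun x => w (Equiv.swap i i' x) * Q t x),
        split (fun x => w x * Q t x)] at hswap
      have hE : ∀ x ∈ (Finset.univ.erase i).erase i',
          w (Equiv.swap i i' x) * Q t x = w x * Q t x := by
        intro x hx
        rcases Finset.mem_erase.mp hx with ⟨hxi', hx2⟩
        rcases Finset.mem_erase.mp hx2 with ⟨hxi, _⟩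
        rw [Equiv.swap_apply_of_ne_of_ne hxi hxi']
      rw [Finset.sum_congr rfl hE] at hswap
      simp only [Equiv.swap_apply_left, Equiv.swap_apply_right] at hswap
      linarith
    have hwlt : w i' < w i := by
      rw [hw, hw]
      have hc : ((i : ℕ) : ℝ) < ((i' : ℕ) : ℝ) := by exact_mod_cast hlt
      nlinarith
    by_contra hcon
    push_neg at hcon
    have : (w i - w i') * (Q t i' - Q t i) > 0 :=
      mul_pos (by linarith) (by linarith)
    nlinarith
  -- lower bound on bundle value
  have hQ_lb : ∀ (t : ℕ) (i : Fin n), ((X t i).card : ℝ) * (1 - ε) ≤ Q t i := by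
    intro t i
    have := Finset.card_nsmul_le_sum (X t i) q (1 - ε) (fun g _ => le_of_lt (hq_lb g))
    simpa [nsmul_eq_mul] using this
  -- upper bound on bundle value
  have hQ_ub : ∀ (t : ℕ) (i : Fin n),
      Q t i < ((X t i).card : ℝ) * (1 - ε) + (2:ℝ) ^ ((t : ℤ) + 1 - (n : ℤ)) * ε := by
    intro t i
    have hsum : Q t i = ((X t i).card : ℝ) * (1 - ε)
        + (∑ g ∈ X t i, (2:ℝ) ^ (((g : ℕ) : ℤ) + 1 - (n : ℤ))) * ε := by
      calc Q t i = ∑ g ∈ X t i, ((1 - ε) + (2:ℝ) ^ (((g : ℕ) : ℤ) + 1 - (n : ℤ)) * ε) :=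
            Finset.sum_congr rfl (fun g _ => hqdef g)
        _ = _ := by
            rw [Finset.sum_add_distrib, Finset.sum_const, nsmul_eq_mul, ← Finset.sum_mul]
    have e1 : ∀ g : Fin m, (2:ℝ) ^ (((g : ℕ) : ℤ) + 1 - (n : ℤ))
        = (2:ℝ) ^ ((g : ℕ)) * (2:ℝ) ^ ((1 : ℤ) - (n : ℤ)) := by
      intro g
      rw [← zpow_natCast (2:ℝ) (g : ℕ), ← zpow_add₀ (by norm_num : (2:ℝ) ≠ 0)]
      congr 1; ring
    have e2 : ∑ g ∈ X t i, (2:ℝ) ^ ((g : ℕ)) ≤ ∑ k ∈ Finset.range t, (2:ℝ) ^ k := by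
      have himg : ∑ g ∈ X t i, (2:ℝ) ^ ((g : ℕ))
          = ∑ k ∈ (X t i).image Fin.val, (2:ℝ) ^ k :=
        (Finset.sum_image (fun x _ y _ hxy => Fin.val_injective hxy)).symm
      rw [himg]
      apply Finset.sum_le_sum_of_subset_of_nonneg
      · intro k hk
        rcases Finset.mem_image.mp hk with ⟨g, hg, rfl⟩
        exact Finset.mem_range.mpr ((hmem t i g).mp hg).1
      · intro k _ _; positivity
    have e3 : ∑ k ∈ Finset.range t, (2:ℝ) ^ k = 2 ^ t - 1 := by
      rw [geom_sum_eq (by norm_num : (2:ℝ) ≠ 1) t]; norm_num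
    have e4 : (2:ℝ) ^ t * (2:ℝ) ^ ((1 : ℤ) - (n : ℤ)) = (2:ℝ) ^ ((t : ℤ) + 1 - (n : ℤ)) := by
      rw [← zpow_natCast (2:ℝ) t, ← zpow_add₀ (by norm_num : (2:ℝ) ≠ 0)]
      congr 1; ring
    have h2p : (0:ℝ) < (2:ℝ) ^ ((1 : ℤ) - (n : ℤ)) := zpow_pos (by norm_num) _
    have key : ∑ g ∈ X t i, (2:ℝ) ^ (((g : ℕ) : ℤ) + 1 - (n : ℤ))
        < (2:ℝ) ^ ((t : ℤ) + 1 - (n : ℤ)) := by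
      calc ∑ g ∈ X t i, (2:ℝ) ^ (((g : ℕ) : ℤ) + 1 - (n : ℤ))
          = (∑ g ∈ X t i, (2:ℝ) ^ ((g : ℕ))) * (2:ℝ) ^ ((1 : ℤ) - (n : ℤ)) := by
            rw [Finset.sum_mul]; exact Finset.sum_congr rfl (fun g _ => e1 g)
        _ ≤ (2 ^ t - 1) * (2:ℝ) ^ ((1 : ℤ) - (n : ℤ)) := by
            apply mul_le_mul_of_nonneg_right _ (le_of_lt h2p)
            rw [← e3]; exact e2
        _ < 2 ^ t * (2:ℝ) ^ ((1 : ℤ) - (n : ℤ)) := by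
            apply mul_lt_mul_of_pos_right _ h2p; linarith
        _ = _ := e4
    rw [hsum]
    have := mul_lt_mul_of_pos_right key hε0
    linarith
  -- the main induction
  intro t
  induction t with
  | zero =>
      intro i h
      left
      constructor <;> · rw [hX]; simp
  | succ t ih =>
      intro i h
      by_cases htm : t < m
      · -- item j0 = ⟨t, htm⟩ arrives
        set j0 : Fin m := ⟨t, htm⟩ with hj0
        have hnotmem : ∀ i' : Fin n, j0 ∉ X t i' := by
          intro i' hc
          exact absurd ((hmem t i' j0).mp hc).1 (by simp [hj0])
        have hXsucc : ∀ i' : Fin n,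
            X (t+1) i' = if a j0 = i' then insert j0 (X t i') else X t i' := by
          intro i'
          split_ifs with hk
          · ext g
            rw [hmem, Finset.mem_insert, hmem]
            constructor
            · rintro ⟨hg1, hg2⟩
              rcases Nat.lt_succ_iff_lt_or_eq.mp hg1 with hlt | heq
              · exact Or.inr ⟨hlt, hg2⟩
              · exact Or.inl (Fin.ext heq)
            · rintro (rfl | ⟨hg1, hg2⟩)
              · exact ⟨Nat.lt_succ_self _, hk⟩
              · exact ⟨Nat.lt_succ_of_lt hg1, hg2⟩
          · ext g
            rw [hmem, hmem]
            constructor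
            · rintro ⟨hg1, hg2⟩
              rcases Nat.lt_succ_iff_lt_or_eq.mp hg1 with hlt | heq
              · exact ⟨hlt, hg2⟩
              · exact absurd hg2 (by rw [show g = j0 from Fin.ext heq]; exact hk)
            · rintro ⟨hg1, hg2⟩
              exact ⟨Nat.lt_succ_of_lt hg1, hg2⟩
        have hcsucc : ∀ i' : Fin n,
            (X (t+1) i').card = (X t i').card + (if a j0 = i' then 1 else 0) := by
          intro i'
          rw [hXsucc i']
          split_ifs with hk
          · rw [Finset.card_insert_of_notMem (hnotmem i')]
          · rw [Nat.add_zero]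
        have hQsucc : ∀ i' : Fin n,
            Q (t+1) i' = Q t i' + (if a j0 = i' then q j0 else 0) := by
          intro i'
          show ∑ g ∈ X (t+1) i', q g = _
          rw [hXsucc i']
          split_ifs with hk
          · rw [Finset.sum_insert (hnotmem i')]; ring
          · rw [add_zero]
        set i' : Fin n := ⟨(i : ℕ) + 1, h⟩ with hi'
        have hii' : (i : ℕ) < (i' : ℕ) := by simp [hi']
        have hs := hsort (t+1) i i' hii'
        by_cases hk1 : a j0 = i'
        · -- item went to the lower agent i+1
          have hki : a j0 ≠ i := by
            rw [hk1]; intro e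
            have := congrArg Fin.val e
            simp [hi'] at this
          have hci : (X (t+1) i).card = (X t i).card := by
            rw [hcsucc i]; simp [hki]
          have hci' : (X (t+1) i').card = (X t i').card + 1 := by
            rw [hcsucc i']; simp [hk1]
          have hQi : Q (t+1) i = Q t i := by rw [hQsucc i]; simp [hki]
          have hQi' : Q (t+1) i' = Q t i' + q j0 := by rw [hQsucc i']; simp [hk1]
          rcases ih i h with ⟨h0, h0'⟩ | hlt
          · -- both empty before: contradiction with sortedness
            rw [← hi'] at h0'
            exfalso
            have hXi : X t i = ∅ := Finset.card_eq_zero.mp h0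
            have hQti : Q t i = 0 := by show ∑ g ∈ X t i, q g = 0; rw [hXi]; simp
            have hQti' : ((X t i').card : ℝ) * (1 - ε) ≤ Q t i' := hQ_lb t i'
            have : (0:ℝ) < q j0 := lt_trans (by linarith) (hq_lb j0)
            rw [hQi, hQi'] at hs
            rw [h0'] at hQti'
            simp at hQti'
            linarith
          · -- before: card i' < card i
            rw [← hi'] at hlt
            rcases lt_or_eq_of_le (Nat.succ_le_of_lt hlt) with hlt2 | heq
            · right; rw [hci, hci']; exact hlt2
            · -- cards would tie: contradiction via key inequality
              exfalso
              have hub := hQ_ub t i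
              have hlb := hQ_lb t i'
              have hqj0 : q j0 = 1 - ε + (2:ℝ) ^ ((t : ℤ) + 1 - (n : ℤ)) * ε := by
                rw [hqdef j0]
              have hcast : ((X t i).card : ℝ) = ((X t i').card : ℝ) + 1 := by
                exact_mod_cast congrArg (Nat.cast (R := ℝ)) heq.symm
              rw [hQi, hQi'] at hs
              rw [hcast] at hub
              nlinarith [hq_lb j0]
        · by_cases hk2 : a j0 = i
          · -- item went to i : counts can only improve
            have hci : (X (t+1) i).card = (X t i).card + 1 := by
              rw [hcsucc i]; simp [hk2]
            have hki' : a j0 ≠ i' := hk1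
            have hci' : (X (t+1) i').card = (X t i').card := by
              rw [hcsucc i']; simp [hki']
            right
            rw [hci, hci']
            rcases ih i h with ⟨h0, h0'⟩ | hlt
            · rw [← hi'] at h0'; omega
            · rw [← hi'] at hlt; omega
          · -- item went elsewhere: nothing changes for this pair
            have hci : (X (t+1) i).card = (X t i).card := by
              rw [hcsucc i]; simp [hk2]
            have hci' : (X (t+1) i').card = (X t i').card := by
              rw [hcsucc i']; simp [hk1]
            rw [hci, hci']
            exact ih i h
      · -- no new item: allocation unchanged
        have heq : ∀ i' : Fin n, X (t+1) i' = X t i' := by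
          intro i'
          rw [hX, hX]
          apply Finset.filter_congr
          intro g _
          have : (g : ℕ) < m := g.2
          have h1 : (g : ℕ) < t + 1 ↔ (g : ℕ) < t := by omega
          simp [h1]
        rw [heq, heq]
        exact ih i h
end

section
/- For restricted additive valuations, the greedy rule that assigns each arriving item g to an agent of minimum current bundle value among agents with v_a({g}) > 0 yields a final allocation in which, for any two agents i and j, agent i's envy toward agent j satisfies v_i(X_j) − v_i(X_i) ≤ 1; consequently (after sorting agents by bundle value) the minimum subsidy is at most n(n−1)/2. -/
open Finset

/-!
Let `g` be the last item of `X j` that agent `i` values. When `g` arrived the greedy rule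
preferred `j`, so `j`'s bundle was then worth to `j` at most what `i`'s bundle was then worth
to `i`, hence at most `v_i(X_i)`. Every item of `X j` is worth its full base value to `j`,
which dominates its value to `i`, and `v_i(g) ≤ 1`; hence `v_i(X_j) ≤ v_i(X_i) + 1`, and
also `v_i(X_j) ≤ v_j(X_j)`.

For the subsidies let `w i = v_i(X_i)`, `U = ⋃ k, [w k - 1, w k)`, and pay agent `i` the
Lebesgue measure of `U ∩ [w i, ∞)`. Then `p i - p j ≥ min 1 (w j - w i)`, which dominates
the envy of `i` toward `j`, and `p i ≤ #{k | w i < w k}`, whose sum over `i` counts pairs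
of agents and so is at most `n.choose 2`.
-/

theorem sum_card_filter_lt_le_choose_two {ι α : Type*} [Fintype ι] [Preorder α] [DecidableLT α]
    (w : ι → α) :
    ∑ i, #{k | w i < w k} ≤ (Fintype.card ι).choose 2 := by
  classical
  rw [← card_sigma, ← card_univ, ← card_powersetCard]
  refine card_le_card_of_injOn (fun p => {p.1, p.2}) (fun p hp => ?_) fun p hp q hq hpq => ?_
  · have hlt : w p.1 < w p.2 := by simpa using hp
    simpa using card_pair (fun h => hlt.ne (congrArg w h))
  · have hp' : w p.1 < w p.2 := by simpa using hp
    have hq' : w q.1 < w q.2 := by simpa using hq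
    have hpq' := congrArg ((↑) : Finset ι → Set ι) hpq
    simp only [coe_pair] at hpq'
    rcases Set.pair_eq_pair_iff.1 hpq' with ⟨h1, h2⟩ | ⟨h1, h2⟩
    · exact Sigma.ext h1 (heq_of_eq h2)
    · exact absurd (h1 ▸ h2 ▸ hp') (lt_asymm hq')

section Subsidy

open MeasureTheory Set

variable {U : Set ℝ}

theorem measureReal_inter_Ici_eq_add (hUm : MeasurableSet U) (hU : volume U ≠ ⊤) {x y : ℝ}
    (hxy : x ≤ y) :
    volume.real (U ∩ Ici x) = volume.real (U ∩ Ico x y) + volume.real (U ∩ Ici y) := by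
  rw [← Ico_union_Ici_eq_Ici hxy, inter_union_distrib_left]
  have hdisj : Disjoint (Ico x y) (Ici y) :=
    (Iio_disjoint_Ici le_rfl).mono_left Ico_subset_Iio_self
  exact measureReal_union ((hdisj.inter_left' U).inter_right' U) (hUm.inter measurableSet_Ici)
    (measure_inter_ne_top_of_left_ne_top hU) (measure_inter_ne_top_of_left_ne_top hU)

theorem min_one_sub_le_measureReal_inter_Ici_sub (hUm : MeasurableSet U) (hU : volume U ≠ ⊤)
    (x : ℝ) {y : ℝ} (hy : Ico (y - 1) y ⊆ U) :
    min 1 (y - x) ≤ volume.real (U ∩ Ici x) - volume.real (U ∩ Ici y) := by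
  rcases le_total x y with hxy | hyx
  · have hsub : Ico (max x (y - 1)) y ⊆ U ∩ Ico x y := fun z hz =>
      ⟨hy ⟨le_of_max_le_right hz.1, hz.2⟩, le_of_max_le_left hz.1, hz.2⟩
    have hmono := measureReal_mono hsub
      (measure_ne_top_of_subset inter_subset_right (measure_Ico_lt_top (μ := volume)).ne)
    rw [Real.volume_real_Ico_of_le (max_le hxy (by linarith))] at hmono
    have hmax : max x (y - 1) ≤ y - min 1 (y - x) :=
      max_le (by linarith [min_le_right 1 (y - x)]) (by linarith [min_le_left 1 (y - x)])
    rw [measureReal_inter_Ici_eq_add hUm hU hxy]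
    linarith
  · have hmono := measureReal_mono (inter_subset_right (s := U) (t := Ico y x))
      (measure_Ico_lt_top (μ := volume)).ne
    rw [Real.volume_real_Ico_of_le hyx] at hmono
    rw [measureReal_inter_Ici_eq_add hUm hU hyx]
    linarith [min_le_right 1 (y - x)]

theorem exists_subsidy_le_choose_two {ι : Type*} [Fintype ι] (w : ι → ℝ) :
    ∃ p : ι → ℝ, (∀ i, 0 ≤ p i) ∧ (∀ i j, min 1 (w j - w i) ≤ p i - p j) ∧
      ∑ i, p i ≤ (Fintype.card ι).choose 2 := by
  classical
  set U := ⋃ k, Ico (w k - 1) (w k)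
  have hUm : MeasurableSet U := MeasurableSet.iUnion fun _ => measurableSet_Ico
  have hU : volume U ≠ ⊤ := ((measure_iUnion_fintype_le _ _).trans_lt (by simp)).ne
  have hUk : ∀ k, Ico (w k - 1) (w k) ⊆ U := subset_iUnion (fun k => Ico (w k - 1) (w k))
  refine ⟨fun i => volume.real (U ∩ Ici (w i)), fun i => measureReal_nonneg,
    fun i j => min_one_sub_le_measureReal_inter_Ici_sub hUm hU _ (hUk j), ?_⟩
  have hle : ∀ i, volume.real (U ∩ Ici (w i)) ≤ #{k | w i < w k} := by
    intro i
    have hsub :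
        U ∩ Ici (w i) ⊆ ⋃ k ∈ ({k | w i < w k} : Finset ι), Ico (w k - 1) (w k) := by
      rintro z ⟨hz, hiz⟩
      obtain ⟨k, hk⟩ := mem_iUnion.1 hz
      exact mem_biUnion (by simpa using hiz.trans_lt hk.2) hk
    calc volume.real (U ∩ Ici (w i))
        ≤ volume.real (⋃ k ∈ ({k | w i < w k} : Finset ι), Ico (w k - 1) (w k)) :=
          measureReal_mono hsub (measure_ne_top_of_subset (iUnion₂_subset fun k _ => hUk k) hU)
      _ ≤ ∑ k ∈ {k | w i < w k}, volume.real (Ico (w k - 1) (w k)) :=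
          measureReal_biUnion_finset_le _ _
      _ = #{k | w i < w k} := by simp
  calc ∑ i, volume.real (U ∩ Ici (w i)) ≤ ∑ i, (#{k | w i < w k} : ℝ) :=
        sum_le_sum fun i _ => hle i
    _ ≤ _ := by exact_mod_cast sum_card_filter_lt_le_choose_two w

end Subsidy

theorem val_le_of_pos {α β : Type*} {u : α → ℝ} {val : β → α → ℝ}
    (hval : ∀ i g, val i g = 0 ∨ val i g = u g) {i j : β} {g : α}
    (hj : 0 < val j g) : val i g ≤ val j g := by
  rcases hval i g with h | h <;> rcases hval j g with h' | h' <;> linarith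

section Greedy

variable {α β : Type*} [Fintype α] [LinearOrder α] [DecidableEq β]

def IsGreedy (val : β → α → ℝ) (a : α → β) : Prop :=
  ∀ g, 0 < val (a g) g ∧ ∀ i, 0 < val i g →
    ∑ h ∈ {h | h < g ∧ a h = a g}, val (a g) h ≤ ∑ h ∈ {h | h < g ∧ a h = i}, val i h

variable {u : α → ℝ} {val : β → α → ℝ} {a : α → β}

theorem IsGreedy.sum_val_le_sum_val_owner (hG : IsGreedy val a)
    (hval : ∀ i g, val i g = 0 ∨ val i g = u g) (i j : β) :
    ∑ g ∈ {g | a g = j}, val i g ≤ ∑ g ∈ {g | a g = j}, val j g :=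
  sum_le_sum fun g hg => val_le_of_pos hval ((mem_filter.1 hg).2 ▸ (hG g).1)

theorem IsGreedy.sum_val_le_add_one (hG : IsGreedy val a)
    (hval : ∀ i g, val i g = 0 ∨ val i g = u g) (hu : ∀ g, 0 ≤ u g ∧ u g ≤ 1)
    (i j : β) : ∑ g ∈ {g | a g = j}, val i g ≤ ∑ g ∈ {g | a g = i}, val i g + 1 := by
  have hnonneg : ∀ k g, 0 ≤ val k g := fun k g => by
    rcases hval k g with h | h <;> linarith [(hu g).1, (hu g).2]
  have hown : 0 ≤ ∑ g ∈ {g | a g = i}, val i g := sum_nonneg fun g _ => hnonneg i g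
  set T := ({g | a g = j} : Finset α).filter (0 < val i ·)
  have hsumT : ∑ g ∈ {g | a g = j}, val i g = ∑ g ∈ T, val i g :=
    (sum_filter_of_ne fun g _ hg => (hnonneg i g).lt_of_ne' hg).symm
  rcases T.eq_empty_or_nonempty with hT | hT
  · rw [hsumT, hT, sum_empty]
    linarith
  set g := T.max' hT
  obtain ⟨hag, hig⟩ : a g = j ∧ 0 < val i g := by simpa [T] using T.max'_mem hT
  have hprefix : T.erase g ⊆ ({h | h < g ∧ a h = j} : Finset α) := fun h hh => by
    obtain ⟨hne, hhT⟩ := mem_erase.1 hh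
    have hahj : a h = j := by simpa [T] using (mem_filter.1 hhT).1
    simpa [hahj] using (T.le_max' h hhT).lt_of_ne hne
  calc ∑ g ∈ {g | a g = j}, val i g
      = ∑ h ∈ T.erase g, val i h + val i g := by rw [hsumT, sum_erase_add _ _ (T.max'_mem hT)]
    _ ≤ ∑ h ∈ {h | h < g ∧ a h = j}, val i h + 1 := by
        gcongr
        · exact fun h _ _ => hnonneg i h
        · rcases hval i g with h | h <;> linarith [(hu g).1, (hu g).2]
    _ ≤ ∑ h ∈ {h | h < g ∧ a h = j}, val j h + 1 := by
        gcongr with h hh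
        exact val_le_of_pos hval ((mem_filter.1 hh).2.2 ▸ (hG h).1)
    _ ≤ ∑ h ∈ {h | h < g ∧ a h = i}, val i h + 1 := by
        gcongr
        simpa only [hag] using (hG g).2 i hig
    _ ≤ ∑ h ∈ {h | a h = i}, val i h + 1 := by
        gcongr
        · exact fun h _ _ => hnonneg i h
        · exact And.right

end Greedy

theorem restricted_additive_greedy_subsidy_general (n m : ℕ)
    (u : Fin m → ℝ) (hu : ∀ g, 0 ≤ u g ∧ u g ≤ 1)
    (val : Fin n → Fin m → ℝ)
    (hval : ∀ i g, val i g = 0 ∨ val i g = u g)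
    (a : Fin m → Fin n)
    (B : Fin m → Fin n → Finset (Fin m))
    (hB : ∀ (g : Fin m) (i : Fin n),
      B g i = (Finset.univ : Finset (Fin m)).filter (fun (j : Fin m) => j < g ∧ a j = i))
    (hgreedy : ∀ g : Fin m, 0 < val (a g) g ∧
      ∀ i, 0 < val i g → ∑ j ∈ B g (a g), val (a g) j ≤ ∑ j ∈ B g i, val i j)
    (X : Fin n → Finset (Fin m))
    (hX : ∀ i, X i = (Finset.univ : Finset (Fin m)).filter (fun g => a g = i)) :
    (∀ i j, (∑ g ∈ X j, val i g) - ∑ g ∈ X i, val i g ≤ 1) ∧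
    ∃ p : Fin n → ℝ, (∀ i, 0 ≤ p i) ∧
      (∀ i j, ∑ g ∈ X j, val i g + p j ≤ ∑ g ∈ X i, val i g + p i) ∧
      ∑ i, p i ≤ (n : ℝ) * ((n : ℝ) - 1) / 2 := by
  have hG : IsGreedy val a := by simpa only [IsGreedy, hB] using hgreedy
  have henvy : ∀ i j, (∑ g ∈ X j, val i g) - ∑ g ∈ X i, val i g ≤
      min 1 ((∑ g ∈ X j, val j g) - ∑ g ∈ X i, val i g) := fun i j => by
    simp only [hX]
    exact le_min (by linarith [hG.sum_val_le_add_one hval hu i j])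
      (by linarith [hG.sum_val_le_sum_val_owner hval i j])
  obtain ⟨p, hp0, hp, hpsum⟩ := exists_subsidy_le_choose_two fun i => ∑ g ∈ X i, val i g
  refine ⟨fun i j => (henvy i j).trans (min_le_left _ _), p, hp0,
    fun i j => by linarith [henvy i j, hp i j], ?_⟩
  simpa [Nat.cast_choose_two] using hpsum

/-- Restricted additive valuations: each item `g` has a base value `u g ∈ [0,1]` and
`val i g ∈ {0, u g}`. Items arrive in order `0, 1, ..., m-1`; the greedy rule gives
each item `g` to an agent `a g` of minimum current bundle value among agents valuing
`g` positively. Then in the final allocation every pairwise envy is at most `1`, and a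
nonnegative envy-eliminating subsidy vector of total at most `n(n-1)/2` exists. -/
theorem restricted_additive_greedy_subsidy (n m : ℕ)
    (u : Fin m → ℝ) (hu : ∀ g, 0 ≤ u g ∧ u g ≤ 1)
    (val : Fin n → Fin m → ℝ)
    (hval : ∀ i g, val i g = 0 ∨ val i g = u g)
    (hpos : ∀ g, ∃ i, 0 < val i g)
    (a : Fin m → Fin n)
    (B : Fin m → Fin n → Finset (Fin m))
    (hB : ∀ (g : Fin m) (i : Fin n),
      B g i = (Finset.univ : Finset (Fin m)).filter (fun (j : Fin m) => j < g ∧ a j = i))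
    (hgreedy : ∀ g : Fin m, 0 < val (a g) g ∧
      ∀ i, 0 < val i g → ∑ j ∈ B g (a g), val (a g) j ≤ ∑ j ∈ B g i, val i j)
    (X : Fin n → Finset (Fin m))
    (hX : ∀ i, X i = (Finset.univ : Finset (Fin m)).filter (fun g => a g = i)) :
    (∀ i j, (∑ g ∈ X j, val i g) - ∑ g ∈ X i, val i g ≤ 1) ∧
    ∃ p : Fin n → ℝ, (∀ i, 0 ≤ p i) ∧
      (∀ i j, ∑ g ∈ X j, val i g + p j ≤ ∑ g ∈ X i, val i g + p i) ∧
      ∑ i, p i ≤ (n : ℝ) * ((n : ℝ) - 1) / 2 :=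
  restricted_additive_greedy_subsidy_general n m u hu val hval a B hB hgreedy X hX
end

section
/- For identical monotone valuations, the greedy rule that assigns each arriving item to an agent of minimum current value maintains at every step that for any agents i, j, either v(X_i) ≥ v(X_j) or there exists an item g ∈ X_j with v(X_j \ {g}) ≤ v(X_i) (EF1); moreover if marginal values are at most 1, then v(X_j) ≤ v(X_i) + 1 for all i, j. -/
open Finset

/-- Identical monotone valuations: all agents share a monotone normalized valuation
`v` with marginal values at most `1`. Items arrive in order and greedy assigns each
item to an agent of minimum current bundle value. Then after every prefix `t`, for any
agents `i, j`, either `i` does not envy `j` or there is an item of `j`'s bundle whose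
removal eliminates the envy (EF1); moreover all bundle values are within `1` of each
other. -/
theorem identical_monotone_greedy_EF1 (n m : ℕ)
    (v : Finset (Fin m) → ℝ)
    (hmono : ∀ S T : Finset (Fin m), S ⊆ T → v S ≤ v T)
    (hnorm : v ∅ = 0)
    (hmarg : ∀ (S : Finset (Fin m)) (g : Fin m), v (insert g S) - v S ≤ 1)
    (a : Fin m → Fin n)
    (X : ℕ → Fin n → Finset (Fin m))
    (hX : ∀ (t : ℕ) (i : Fin n),
      X t i = (Finset.univ : Finset (Fin m)).filter (fun (j : Fin m) => (j : ℕ) < t ∧ a j = i))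
    (hgreedy : ∀ g : Fin m, ∀ i : Fin n, v (X g (a g)) ≤ v (X g i)) :
    (∀ t : ℕ, ∀ i j : Fin n,
      v (X t j) ≤ v (X t i) ∨ ∃ g ∈ X t j, v (X t j \ {g}) ≤ v (X t i)) ∧
    (∀ t : ℕ, ∀ i j : Fin n, v (X t j) ≤ v (X t i) + 1) := by
  have key : ∀ t : ℕ, ∀ i j : Fin n,
      X t j = ∅ ∨ ∃ g ∈ X t j, v (X t j \ {g}) ≤ v (X t i) := by
    intro t i j
    rcases eq_or_ne (X t j) ∅ with he | hne
    · exact Or.inl he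
    · right
      obtain ⟨hne'⟩ : Nonempty (X t j).Nonempty := ⟨nonempty_iff_ne_empty.mpr hne⟩
      set g := (X t j).max' hne' with hg
      have hgmem : g ∈ X t j := (X t j).max'_mem hne'
      have hgprop : (g : ℕ) < t ∧ a g = j := by
        have := hgmem
        rw [hX] at this
        simpa using this
      refine ⟨g, hgmem, ?_⟩
      have heq : X t j \ {g} = X (g : ℕ) j := by
        ext k
        rw [hX, hX]
        simp only [mem_sdiff, mem_filter, mem_univ, true_and, mem_singleton]
        constructor
        · rintro ⟨⟨hkt, hak⟩, hkg⟩
          have hle : k ≤ g := (X t j).le_max' k (by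
            rw [hX]; simp [hkt, hak])
          exact ⟨lt_of_le_of_ne (Fin.le_def.mp hle) (fun h => hkg (Fin.ext h)), hak⟩
        · rintro ⟨hkg, hak⟩
          exact ⟨⟨hkg.trans hgprop.1, hak⟩, fun h => by simp [h] at hkg⟩
      have hsub : X (g : ℕ) i ⊆ X t i := by
        rw [hX, hX]
        intro k hk
        simp only [mem_filter, mem_univ, true_and] at hk ⊢
        exact ⟨hk.1.trans hgprop.1, hk.2⟩
      calc v (X t j \ {g}) = v (X (g : ℕ) j) := by rw [heq]
        _ = v (X (g : ℕ) (a g)) := by rw [hgprop.2]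
        _ ≤ v (X (g : ℕ) i) := hgreedy g i
        _ ≤ v (X t i) := hmono _ _ hsub
  constructor
  · intro t i j
    rcases key t i j with he | h
    · left
      rw [he, hnorm]
      calc (0:ℝ) = v ∅ := hnorm.symm
        _ ≤ v (X t i) := hmono _ _ (empty_subset _)
    · exact Or.inr h
  · intro t i j
    rcases key t i j with he | ⟨g, hgmem, hle⟩
    · rw [he, hnorm]
      have : (0:ℝ) ≤ v (X t i) := hnorm ▸ hmono _ _ (empty_subset _)
      linarith
    · have hins : insert g (X t j \ {g}) = X t j := by
        ext k
        simp only [mem_insert, mem_sdiff, mem_singleton]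
        constructor
        · rintro (rfl | ⟨h, _⟩) <;> [exact hgmem; exact h]
        · intro hk
          by_cases h : k = g
          · exact Or.inl h
          · exact Or.inr ⟨hk, h⟩
      have := hmarg (X t j \ {g}) g
      rw [hins] at this
      linarith
end

section
/- For personalized k-valued additive valuations, the round-robin-by-type allocation (within each item type, assigning the r-th arriving copy to the agent with the r-th highest value for that type) is locally efficient, and every pairwise envy is at most k^n, giving a total minimum subsidy of at most n^2 · k^n. -/
/-!
Within one item type, round robin in decreasing order of value gives the agents counts that
decrease with their value and differ by at most one. So every type is allocated monotonically,
which makes the allocation locally efficient by the rearrangement inequality, and each of the at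
most `k ^ n` types adds at most one item value `≤ 1` to any envy. Local efficiency means that no
cycle of the envy graph has positive weight, so paying each agent the weight of the heaviest
simple path starting at it in the envy graph removes all envy and costs at most `n · k ^ n` per
agent.
-/

open Finset

lemma card_filter_range_mod_eq {n r : ℕ} (hr : r < n) (M : ℕ) :
    #{p ∈ range M | p % n = r} = M / n + if r < M % n then 1 else 0 := by
  rw [← Nat.count_eq_card_filter_range, ← Nat.mod_eq_of_lt hr,
    ← Nat.count_modEq_card M (by omega)]
  rfl

lemma card_filter_range_mod_eq_le_of_le {n r r' : ℕ} (hrr' : r ≤ r') (hr' : r' < n) (M : ℕ) :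
    #{p ∈ range M | p % n = r'} ≤ #{p ∈ range M | p % n = r} := by
  rw [card_filter_range_mod_eq hr', card_filter_range_mod_eq (hrr'.trans_lt hr')]
  split_ifs <;> omega

lemma card_filter_range_mod_eq_le_add_one {n r r' : ℕ} (hr : r < n) (hr' : r' < n) (M : ℕ) :
    #{p ∈ range M | p % n = r} ≤ #{p ∈ range M | p % n = r'} + 1 := by
  rw [card_filter_range_mod_eq hr, card_filter_range_mod_eq hr']
  split_ifs <;> omega

/-- Ranking the elements of `s` from `0` is a bijection onto `range #s`. -/
lemma card_filter_rank_eq {α : Type*} [LinearOrder α] (s : Finset α) (P : ℕ → Prop)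
    [DecidablePred P] :
    #{x ∈ s | P #{y ∈ s | y < x}} = #{p ∈ range #s | P p} := by
  set rank : α → ℕ := fun x => #{y ∈ s | y < x}
  have hmono : StrictMonoOn rank s := fun x hx x' hx' hlt =>
    card_lt_card <| (ssubset_iff_of_subset fun y hy => by
      simp only [mem_filter] at hy ⊢
      exact ⟨hy.1, hy.2.trans hlt⟩).2 ⟨x, by simpa [hlt] using hx, by simp⟩
  have himage : s.image rank = range #s := by
    refine eq_of_subset_of_card_le (fun p hp => ?_) ?_
    · obtain ⟨x, hx, rfl⟩ := mem_image.1 hp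
      exact mem_range.2 <| card_lt_card <| (ssubset_iff_of_subset (filter_subset _ _)).2
        ⟨x, hx, by simp⟩
    · rw [card_range, card_image_of_injOn hmono.injOn]
  rw [← himage, filter_image, card_image_of_injOn (hmono.injOn.mono (filter_subset _ _))]

section RoundRobin

variable {α β : Type*} [Fintype α] [LinearOrder α] [DecidableEq β] {n : ℕ} [NeZero n]

/-- Within each type `t`, the copy preceded by `r` earlier copies of `t` goes to the agent
ranked `r mod n` by `σ t`. -/
def roundRobinByType (σ : β → Equiv.Perm (Fin n)) (typ : α → β) (i : Fin n) : Finset α :=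
  {g | σ (typ g) (Fin.ofNat n #{g' | g' < g ∧ typ g' = typ g}) = i}

lemma card_filter_roundRobinByType (σ : β → Equiv.Perm (Fin n)) (typ : α → β) (t : β)
    (i : Fin n) :
    #{g ∈ roundRobinByType σ typ i | typ g = t} =
      #{p ∈ range #{g | typ g = t} | p % n = (σ t).symm i} := by
  rw [← card_filter_rank_eq _ fun p => p % n = (σ t).symm i]
  congr 1
  ext g
  simp only [roundRobinByType, mem_filter, mem_univ, true_and, filter_filter]
  rw [and_comm]
  refine and_congr_right fun hg => ?_
  simp only [hg, and_comm, ← Equiv.eq_symm_apply, Fin.ext_iff, Fin.val_ofNat]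

lemma card_filter_roundRobinByType_le_add_one (σ : β → Equiv.Perm (Fin n)) (typ : α → β)
    (t : β) (i j : Fin n) :
    #{g ∈ roundRobinByType σ typ j | typ g = t} ≤
      #{g ∈ roundRobinByType σ typ i | typ g = t} + 1 := by
  simp only [card_filter_roundRobinByType]
  exact card_filter_range_mod_eq_le_add_one (Fin.is_lt _) (Fin.is_lt _) _

lemma monovary_card_filter_roundRobinByType {σ : (Fin n → ℝ) → Equiv.Perm (Fin n)}
    (hσ : ∀ (t : Fin n → ℝ) (r r' : Fin n), r ≤ r' → t (σ t r') ≤ t (σ t r))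
    (typ : α → Fin n → ℝ) (t : Fin n → ℝ) :
    Monovary (fun i => (#{g ∈ roundRobinByType σ typ i | typ g = t} : ℝ)) t := by
  intro i j hij
  have hrank : (σ t).symm j ≤ (σ t).symm i := by
    by_contra! h
    exact absurd hij (not_lt.2 (by simpa using hσ t _ _ h.le))
  dsimp only
  simp only [card_filter_roundRobinByType, Nat.cast_le]
  exact card_filter_range_mod_eq_le_of_le hrank (Fin.is_lt _) _

end RoundRobin

section TypeDecomposition

variable {ι α : Type*} [Fintype ι] (X : ι → Finset α) (typ : α → ι → ℝ)

lemma sum_apply_eq_sum_image_card_mul [Fintype α] (s : Finset α) (i : ι) :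
    ∑ g ∈ s, typ g i = ∑ t ∈ univ.image typ, #{g ∈ s | typ g = t} * t i := by
  rw [← sum_fiberwise_of_maps_to fun g _ => mem_image_of_mem typ (mem_univ g)]
  refine sum_congr rfl fun t _ => ?_
  rw [sum_congr rfl fun g hg => by rw [(mem_filter.1 hg).2], sum_const, nsmul_eq_mul]

/-- By the rearrangement inequality, applied type by type. -/
lemma sum_sum_comp_perm_le_of_monovary [Fintype α]
    (hmono : ∀ t, Monovary (fun i => (#{g ∈ X i | typ g = t} : ℝ)) t) (π : Equiv.Perm ι) :
    ∑ i, ∑ g ∈ X i, typ g (π i) ≤ ∑ i, ∑ g ∈ X i, typ g i := by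
  simp only [sum_apply_eq_sum_image_card_mul typ]
  rw [sum_comm, sum_comm (s := univ)]
  exact sum_le_sum fun t _ => by simpa using (hmono t).sum_smul_comp_perm_le_sum_smul (σ := π)

lemma sum_sub_sum_le_card_image [Fintype α] (i j : ι)
    (hcount : ∀ t, #{g ∈ X j | typ g = t} ≤ #{g ∈ X i | typ g = t} + 1)
    (hval : ∀ g, 0 ≤ typ g i ∧ typ g i ≤ 1) :
    ∑ g ∈ X j, typ g i - ∑ g ∈ X i, typ g i ≤ #(univ.image typ) := by
  simp only [sum_apply_eq_sum_image_card_mul typ, ← sum_sub_distrib]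
  refine (sum_le_sum (g := fun _ => (1 : ℝ)) fun t ht => ?_).trans_eq (by simp)
  obtain ⟨g, -, rfl⟩ := mem_image.1 ht
  have : (#{g' ∈ X j | typ g' = typ g} : ℝ) ≤ #{g' ∈ X i | typ g' = typ g} + 1 := by
    exact_mod_cast hcount (typ g)
  nlinarith [hval g]

lemma card_image_le_pow [Fintype α] [DecidableEq ι] {k : ℕ} (A : ι → Finset ℝ)
    (hA : ∀ i, #(A i) ≤ k) (hmem : ∀ g i, typ g i ∈ A i) : #(univ.image typ) ≤ k ^ Fintype.card ι :=
  calc #(univ.image typ) ≤ #(Fintype.piFinset A) :=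
        card_le_card fun t ht => by
          obtain ⟨g, -, rfl⟩ := mem_image.1 ht
          exact Fintype.mem_piFinset.2 (hmem g)
    _ = ∏ i, #(A i) := Fintype.card_piFinset A
    _ ≤ k ^ Fintype.card ι := prod_le_pow_card _ _ _ fun i _ => hA i

lemma sum_sub_sum_comp_perm_nonpos (v : ι → α → ℝ)
    (heff : ∀ π : Equiv.Perm ι, ∑ i, ∑ g ∈ X i, v (π i) g ≤ ∑ i, ∑ g ∈ X i, v i g)
    (π : Equiv.Perm ι) :
    ∑ i, (∑ g ∈ X (π i), v i g - ∑ g ∈ X i, v i g) ≤ 0 := by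
  have hcomp : ∑ i, ∑ g ∈ X (π i), v i g = ∑ i, ∑ g ∈ X i, v (π⁻¹ i) g := by
    rw [← Equiv.sum_comp π fun i => ∑ g ∈ X i, v (π⁻¹ i) g]
    simp [Equiv.Perm.inv_def]
  rw [sum_sub_distrib, hcomp]
  linarith [heff π⁻¹]

end TypeDecomposition

variable {ι : Type*} (w : ι → ι → ℝ)

def pathWeight (l : List ι) : ℝ := (List.zipWith w l l.tail).sum

@[simp]
lemma pathWeight_nil : pathWeight w [] = 0 := rfl

@[simp]
lemma pathWeight_singleton (x : ι) : pathWeight w [x] = 0 := rfl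

@[simp]
lemma pathWeight_cons_cons (x y : ι) (l : List ι) :
    pathWeight w (x :: y :: l) = w x y + pathWeight w (y :: l) := by
  simp [pathWeight]

lemma pathWeight_append_cons (l₁ : List ι) (x : ι) (l₂ : List ι) :
    pathWeight w (l₁ ++ x :: l₂) = pathWeight w (l₁ ++ [x]) + pathWeight w (x :: l₂) := by
  induction l₁ with
  | nil => simp
  | cons y l₁ ih => cases l₁ <;> simp_all [add_assoc]

lemma pathWeight_le_length_mul {B : ℝ} (hB : ∀ i j, w i j ≤ B) :
    ∀ l : List ι, pathWeight w l ≤ (l.length - 1 : ℕ) * B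
  | [] | [_] => by simp
  | x :: y :: l => by
    have := pathWeight_le_length_mul hB (y :: l)
    simp only [pathWeight_cons_cons, List.length_cons, Nat.add_sub_cancel] at this ⊢
    push_cast
    linarith [hB x y]

lemma pathWeight_cycle_eq_sum_formPerm [Fintype ι] [DecidableEq ι] (hw : ∀ i, w i i = 0)
    {x : ι} {l : List ι} (hl : (x :: l).Nodup) :
    pathWeight w (x :: l ++ [x]) = ∑ i, w i ((x :: l).formPerm i) := by
  have hzip : List.zipWith w (x :: l) ((x :: l).rotate 1) =
      (x :: l).map fun i => w i ((x :: l).formPerm i) :=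
    List.ext_getElem (by simp) fun t _ _ => by
      simp only [List.getElem_zipWith, List.getElem_map, List.getElem_rotate,
        List.formPerm_apply_getElem _ hl]
  rw [List.rotate_cons_succ, List.rotate_zero] at hzip
  have hsupp :
      ∑ i ∈ (x :: l).toFinset, w i ((x :: l).formPerm i) = ∑ i, w i ((x :: l).formPerm i) :=
    sum_subset (subset_univ _) fun i _ hi => by
      rw [List.formPerm_apply_of_notMem (by simpa using hi), hw]
  have htrunc :
      List.zipWith w (x :: l ++ [x]) (l ++ [x]) = List.zipWith w (x :: l) (l ++ [x]) := by
    simpa using List.zipWith_append (f := w) (l₁ := x :: l) (l₁' := [x]) (l₂ := l ++ [x])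
      (l₂' := []) (by simp)
  rw [← hsupp, List.sum_toFinset _ hl, ← hzip, ← htrunc]
  rfl

variable [Fintype ι]

noncomputable def maxPathWeight (i : ι) : ℝ :=
  ⨆ l : {l : List ι // (i :: l).Nodup}, pathWeight w (i :: l.1)

variable {w}

lemma pathWeight_le_card_mul {B : ℝ} (hB : ∀ i j, w i j ≤ B) (hB₀ : 0 ≤ B) {l : List ι}
    (hl : l.Nodup) : pathWeight w l ≤ Fintype.card ι * B :=
  (pathWeight_le_length_mul w hB l).trans <|
    mul_le_mul_of_nonneg_right (by exact_mod_cast (Nat.sub_le _ 1).trans hl.length_le_card) hB₀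

lemma maxPathWeight_le {B : ℝ} (hB : ∀ i j, w i j ≤ B) (hB₀ : 0 ≤ B) (i : ι) :
    maxPathWeight w i ≤ Fintype.card ι * B :=
  have : Nonempty {l : List ι // (i :: l).Nodup} := ⟨⟨[], List.nodup_singleton i⟩⟩
  ciSup_le fun l => pathWeight_le_card_mul hB hB₀ l.2

lemma le_maxPathWeight {B : ℝ} (hB : ∀ i j, w i j ≤ B) (hB₀ : 0 ≤ B) {i : ι} {l : List ι}
    (hl : (i :: l).Nodup) : pathWeight w (i :: l) ≤ maxPathWeight w i :=
  le_ciSup (f := fun l : {l : List ι // (i :: l).Nodup} => pathWeight w (i :: l.1))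
    ⟨_, Set.forall_mem_range.2 fun l => pathWeight_le_card_mul hB hB₀ l.2⟩ ⟨l, hl⟩

lemma maxPathWeight_nonneg {B : ℝ} (hB : ∀ i j, w i j ≤ B) (hB₀ : 0 ≤ B) (i : ι) :
    0 ≤ maxPathWeight w i := by
  simpa using le_maxPathWeight hB hB₀ (List.nodup_singleton i)

/-- Extending a simple path from `j` by the arc `i → j` either gives a simple path from `i`, or
closes a cycle through `i` followed by a simple path from `i`. -/
lemma add_maxPathWeight_le [DecidableEq ι] {B : ℝ} (hB : ∀ i j, w i j ≤ B) (hB₀ : 0 ≤ B)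
    (hcycle : ∀ x l, (x :: l).Nodup → pathWeight w (x :: l ++ [x]) ≤ 0) (i j : ι) :
    w i j + maxPathWeight w j ≤ maxPathWeight w i := by
  have : Nonempty {l : List ι // (j :: l).Nodup} := ⟨⟨[], List.nodup_singleton j⟩⟩
  rw [← le_sub_iff_add_le']
  refine ciSup_le fun ⟨l, hl⟩ => le_sub_iff_add_le'.2 ?_
  rw [← pathWeight_cons_cons]
  by_cases hi : i ∈ j :: l
  · obtain ⟨l₁, l₂, hsplit⟩ := List.append_of_mem hi
    rw [hsplit] at hl ⊢
    have hl₁ : (i :: l₁).Nodup :=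
      (List.nodup_middle.1 hl).sublist ((List.sublist_append_left l₁ l₂).cons_cons i)
    rw [← List.cons_append, pathWeight_append_cons]
    linarith [hcycle i l₁ hl₁,
      le_maxPathWeight hB hB₀ (hl.sublist (List.sublist_append_right _ _))]
  · exact le_maxPathWeight hB hB₀ (List.nodup_cons.2 ⟨hi, hl⟩)

/-- Personalized `k`-valued additive valuations: each agent `i` has an additive
valuation whose singleton values lie in an agent-specific set `A i` of at most `k`
values in `[0,1]`. The type of an item is the vector of its singleton values. The
round-robin-by-type rule assigns, within each type, the `r`-th arriving copy to the
agent with the `r`-th highest value for that type (cyclically, via a sorting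
permutation `σ t`). The resulting allocation is locally efficient, every pairwise envy
is at most `k^n`, and a nonnegative envy-eliminating subsidy vector of total at most
`n² · k^n` exists. -/
theorem k_valued_round_robin_subsidy (n m k : ℕ) (hn : 0 < n)
    (val : Fin n → Fin m → ℝ)
    (A : Fin n → Finset ℝ) (hA : ∀ i, (A i).card ≤ k)
    (hrange : ∀ i g, val i g ∈ A i ∧ 0 ≤ val i g ∧ val i g ≤ 1)
    (typ : Fin m → (Fin n → ℝ)) (htyp : ∀ g, typ g = fun i => val i g)
    (σ : (Fin n → ℝ) → Equiv.Perm (Fin n))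
    (hσ : ∀ t : Fin n → ℝ, ∀ r r' : Fin n, r ≤ r' → t (σ t r') ≤ t (σ t r))
    (pos : Fin m → ℕ)
    (hpos : ∀ g : Fin m, pos g =
      ((Finset.univ : Finset (Fin m)).filter (fun g' => g' < g ∧ typ g' = typ g)).card)
    (a : Fin m → Fin n)
    (ha : ∀ g : Fin m, a g = σ (typ g) ⟨pos g % n, Nat.mod_lt _ hn⟩)
    (X : Fin n → Finset (Fin m))
    (hX : ∀ i, X i = (Finset.univ : Finset (Fin m)).filter (fun g => a g = i)) :
    (∀ π : Equiv.Perm (Fin n),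
      ∑ i, ∑ g ∈ X i, val (π i) g ≤ ∑ i, ∑ g ∈ X i, val i g) ∧
    (∀ i j, (∑ g ∈ X j, val i g) - ∑ g ∈ X i, val i g ≤ (k : ℝ) ^ n) ∧
    ∃ p : Fin n → ℝ, (∀ i, 0 ≤ p i) ∧
      (∀ i j, ∑ g ∈ X j, val i g + p j ≤ ∑ g ∈ X i, val i g + p i) ∧
      ∑ i, p i ≤ (n : ℝ) ^ 2 * (k : ℝ) ^ n := by
  have : NeZero n := ⟨hn.ne'⟩
  obtain rfl : X = roundRobinByType σ typ := by
    ext i g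
    simp only [hX, ha, hpos, roundRobinByType, mem_filter, mem_univ, true_and]
    rfl
  obtain rfl : val = fun i g => typ g i := by
    ext i g
    rw [htyp]
  beta_reduce
  set X := roundRobinByType σ typ
  have heff :=
    sum_sum_comp_perm_le_of_monovary X typ (monovary_card_filter_roundRobinByType hσ typ)
  have htypes : (#(univ.image typ) : ℝ) ≤ (k : ℝ) ^ n := by
    exact_mod_cast (card_image_le_pow typ A hA fun g i => (hrange i g).1).trans_eq (by simp)
  have henvy (i j : Fin n) : ∑ g ∈ X j, typ g i - ∑ g ∈ X i, typ g i ≤ (k : ℝ) ^ n :=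
    (sum_sub_sum_le_card_image X typ i j (card_filter_roundRobinByType_le_add_one σ typ · i j)
      fun g => (hrange i g).2).trans htypes
  set envy : Fin n → Fin n → ℝ := fun i j => ∑ g ∈ X j, typ g i - ∑ g ∈ X i, typ g i
  have hcycle (x : Fin n) (l : List (Fin n)) (hl : (x :: l).Nodup) :
      pathWeight envy (x :: l ++ [x]) ≤ 0 :=
    (pathWeight_cycle_eq_sum_formPerm envy (fun _ => sub_self _) hl).trans_le
      (sum_sub_sum_comp_perm_nonpos X (fun i g => typ g i) heff _)
  have hk : (0 : ℝ) ≤ (k : ℝ) ^ n := by positivity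
  refine ⟨heff, henvy, maxPathWeight envy, maxPathWeight_nonneg henvy hk, fun i j => ?_, ?_⟩
  · linarith [add_maxPathWeight_le henvy hk hcycle i j]
  · calc ∑ i, maxPathWeight envy i ≤ ∑ _i : Fin n, (n : ℝ) * (k : ℝ) ^ n :=
          sum_le_sum fun i _ => by simpa using maxPathWeight_le henvy hk i
      _ = (n : ℝ) ^ 2 * (k : ℝ) ^ n := by
          rw [sum_const, card_univ, Fintype.card_fin, nsmul_eq_mul]
          ring
end
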